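/- arXiv:2601.23101 — 2 statements merged into one kernel-verified Lean document; each statement's English description precedes it below -/
import Mathlib

section
/- If H is a 2-connected graph that is a bipartite minor of a graph G, then H is a bipartite minor of some block of G. -/
open SimpleGraph

/-- Finite simple graphs are modelled as subgraphs of the complete graph on `ℕ`. -/
abbrev FG : Type := SimpleGraph.Subgraph (⊤ : SimpleGraph ℕ)

/-- Build a graph from a vertex set and a (not necessarily symmetric) edge description. -/
def ofRel (V : Set ℕ) (r : ℕ → ℕ → Prop) : FG where
  verts := V
  Adj x y := x ≠ y ∧ x ∈ V ∧ y ∈ V ∧ (r x y ∨ r y x)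
  adj_sub := fun h => (SimpleGraph.top_adj _ _).mpr h.1
  edge_vert := fun h => h.2.1
  symm := ⟨fun _ _ h => ⟨h.1.symm, h.2.2.1, h.2.1, h.2.2.2.symm⟩⟩

/-- The cycle `C_n` on `n` vertices. -/
def cycleFG (n : ℕ) : FG := ofRel {x | x < n} (fun i j => j = (i + 1) % n)

/-- The path `P_n` on `n` vertices. -/
def pathFG (n : ℕ) : FG := ofRel {x | x < n} (fun i j => j = i + 1)

/-- The bull `B(l, l1)`: a cycle (snout) of length `l` on `0,…,l-1`, together with a horn,
namely a path on the `l1` vertices `l,…,l+l1-1` joined by an edge to the snout vertex `0`. -/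
def bullFG (l l1 : ℕ) : FG :=
  ofRel {x | x < l + l1}
    (fun i j => (i < l ∧ j = (i + 1) % l) ∨ (l ≤ i ∧ j = i + 1 ∧ j < l + l1) ∨ (i = 0 ∧ j = l))

/-- The one-eared dog `D(l, l1)`: a snout cycle of length `l` on `0,…,l-1` together with an ear,
namely a cycle of length `l1` sharing the snout edge `{0,1}` (its `l1 - 2` new vertices
are `l,…,l+l1-3`). -/
def dog1FG (l l1 : ℕ) : FG :=
  ofRel {x | x < l + l1 - 2}
    (fun i j => (i < l ∧ j = (i + 1) % l) ∨ (i = 1 ∧ j = l) ∨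
      (l ≤ i ∧ j = i + 1 ∧ j ≤ l + l1 - 3) ∨ (i = l + l1 - 3 ∧ j = 0))

/-- The two-eared dog `D(l, l1, l2)`: a snout cycle of length `l` on `0,…,l-1` together with
an ear of length `l1` sharing the snout edge `{0,1}` (new vertices `l,…,l+l1-3`) and
an ear of length `l2` sharing the snout edge `{2,3}` (new vertices `l+l1-2,…,l+l1+l2-5`),
so the ears are attached at the consecutive snout vertices `0,1,2,3`. -/
def dog2FG (l l1 l2 : ℕ) : FG :=
  ofRel {x | x < l + l1 + l2 - 4}
    (fun i j => (i < l ∧ j = (i + 1) % l) ∨ (i = 1 ∧ j = l) ∨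
      (l ≤ i ∧ j = i + 1 ∧ j ≤ l + l1 - 3) ∨ (i = l + l1 - 3 ∧ j = 0) ∨
      (i = 3 ∧ j = l + l1 - 2) ∨ (l + l1 - 2 ≤ i ∧ j = i + 1 ∧ j ≤ l + l1 + l2 - 5) ∨
      (i = l + l1 + l2 - 5 ∧ j = 2))

/-- The tree `T_l`: a path `0,…,l` of length `l` (i.e. on `l+1` vertices), with the two extra
leaves `l+1, l+2` attached to the endpoint `0` and the two extra leaves `l+3, l+4` attached to
the endpoint `l`.  (Equivalently: obtained from two paths on three vertices and a path of
length `l` by identifying the endpoints of the latter with the internal vertices of the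
former two.) -/
def treeFG (l : ℕ) : FG :=
  ofRel {x | x < l + 5}
    (fun i j => (j = i + 1 ∧ j ≤ l) ∨ (i = 0 ∧ (j = l + 1 ∨ j = l + 2)) ∨
      (i = l ∧ (j = l + 3 ∨ j = l + 4)))

/-- The contraction of the vertices `u` and `v` in `H`: the two vertices are identified
(the merged vertex keeps the label `u`); the merged vertex is adjacent to every neighbour of
`u` or `v`. -/
def contractFG (H : FG) (u v : ℕ) : FG where
  verts := H.verts \ {v}
  Adj x y := x ≠ y ∧ x ≠ v ∧ y ≠ v ∧
    (H.Adj x y ∨ (x = u ∧ u ∈ H.verts ∧ H.Adj v y) ∨ (y = u ∧ u ∈ H.verts ∧ H.Adj x v))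
  adj_sub := fun h => (SimpleGraph.top_adj _ _).mpr h.1
  edge_vert := by
    rintro x y ⟨hxy, hxv, hyv, h | ⟨rfl, hu, h⟩ | ⟨h1, h2, h3⟩⟩
    · exact ⟨H.edge_vert h, hxv⟩
    · exact ⟨hu, hxv⟩
    · exact ⟨H.edge_vert h3, hxv⟩
  symm := by
    refine ⟨?_⟩
    rintro x y ⟨hxy, hxv, hyv, h | ⟨h1, h2, h3⟩ | ⟨h1, h2, h3⟩⟩
    · exact ⟨hxy.symm, hyv, hxv, Or.inl h.symm⟩
    · exact ⟨hxy.symm, hyv, hxv, Or.inr (Or.inr ⟨h1, h2, h3.symm⟩)⟩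
    · exact ⟨hxy.symm, hyv, hxv, Or.inr (Or.inl ⟨h1, h2, h3.symm⟩)⟩

/-- The number of connected components of a graph. -/
noncomputable def ncompFG (H : FG) : ℕ := Nat.card H.coe.ConnectedComponent

/-- `C` is the vertex set of an induced cycle of `H`: it is a finite set of vertices of `H`
whose induced subgraph is connected and `2`-regular, i.e. is exactly a cycle (in particular
the cycle has no chord). -/
def IsInducedCycleFG (H : FG) (C : Set ℕ) : Prop :=
  C ⊆ H.verts ∧ C.Finite ∧ 3 ≤ C.ncard ∧ ((H.induce C).coe).Connected ∧
    ∀ x ∈ C, {y | y ∈ C ∧ H.Adj x y}.ncard = 2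

/-- The cycle with vertex set `C` is non-separating in `H`: deleting it does not increase the
number of connected components. -/
def NonSeparatingFG (H : FG) (C : Set ℕ) : Prop :=
  ncompFG (H.deleteVerts C) ≤ ncompFG H

/-- The contraction of `u` and `v` in `H` is admissible: `u` and `v` have a common neighbour
`w` such that the path `u, w, v` is part of an induced non-separating cycle of `H`. -/
def AdmissiblePair (H : FG) (u v : ℕ) : Prop :=
  u ≠ v ∧ ∃ w, H.Adj u w ∧ H.Adj w v ∧
    ∃ C : Set ℕ, u ∈ C ∧ w ∈ C ∧ v ∈ C ∧ IsInducedCycleFG H C ∧ NonSeparatingFG H C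

/-- A single bipartite-minor operation: `BStep G H` holds when `H` is obtained from `G` by
deleting a vertex, deleting an edge, or performing an admissible contraction. -/
inductive BStep : FG → FG → Prop
  | deleteVert (G : FG) (v : ℕ) : BStep G (G.deleteVerts {v})
  | deleteEdge (G : FG) (e : Sym2 ℕ) : BStep G (G.deleteEdges {e})
  | contract (G : FG) (u v : ℕ) (h : AdmissiblePair G u v) : BStep G (contractFG G u v)

/-- A single minor operation: `MStep G H` holds when `H` is obtained from `G` by deleting a
vertex, deleting an edge, or contracting an edge. -/
inductive MStep : FG → FG → Prop
  | deleteVert (G : FG) (v : ℕ) : MStep G (G.deleteVerts {v})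
  | deleteEdge (G : FG) (e : Sym2 ℕ) : MStep G (G.deleteEdges {e})
  | contract (G : FG) (u v : ℕ) (h : G.Adj u v) : MStep G (contractFG G u v)

/-- Two graphs are isomorphic. -/
def IsoFG (H K : FG) : Prop := Nonempty (H.coe ≃g K.coe)

/-- `H ≤_B G`: `H` is a bipartite minor of `G`, i.e. (a graph isomorphic to) `H` can be obtained
from `G` by a sequence of vertex deletions, edge deletions and admissible contractions. -/
def BipMinor (H G : FG) : Prop :=
  ∃ H' : FG, Relation.ReflTransGen BStep G H' ∧ IsoFG H' H

/-- `H ≤_M G`: `H` is a minor of `G`, i.e. (a graph isomorphic to) `H` can be obtained from `G`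
by a sequence of vertex deletions, edge deletions and edge contractions. -/
def MinorFG (H G : FG) : Prop :=
  ∃ H' : FG, Relation.ReflTransGen MStep G H' ∧ IsoFG H' H

/-- A graph is `2`-connected if deleting any set of at most one vertex leaves a connected
graph. -/
def TwoConnectedFG (H : FG) : Prop :=
  ∀ U : Set ℕ, U.Subsingleton → ((H.deleteVerts U).coe).Connected

/-- `B` is a block of `G`: a maximal `2`-connected subgraph of `G`. -/
def IsBlockFG (G B : FG) : Prop :=
  B ≤ G ∧ TwoConnectedFG B ∧ ∀ B' : FG, B ≤ B' → B' ≤ G → TwoConnectedFG B' → B' = B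

/-- A graph is bipartite iff it is `2`-colourable. -/
def BipartiteFG (H : FG) : Prop := H.coe.Colorable 2

/-- A forest is an acyclic graph. -/
def ForestFG (H : FG) : Prop := H.coe.IsAcyclic

/-- `H` is (isomorphic to) a subgraph of `G`. -/
def IsSubgraphFG (H G : FG) : Prop := ∃ S : FG, S ≤ G ∧ IsoFG S H

/-!
Induct along the sequence of operations leading from `G` to (a copy of) `H`, from its end: a
`2`-connected subgraph `K` with `H ≤_B K` of the graph obtained after one operation is lifted to a
`2`-connected subgraph of the graph before it, of which `H` is still a bipartite minor; a block
containing the lift yields it by deletions. After a deletion `K` is already a subgraph. After the admissible contraction of `u, v`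
along an induced non-separating cycle `C`: if every edge of `K` at the merged vertex comes from
`u`, then `K` is a subgraph of `G`; if every such edge comes from `v`, then so is `K` with `u`
renamed `v`; otherwise `K ∪ C` induces a `2`-connected subgraph of `G`. In the block `B` containing
it, `C` is still an induced non-separating cycle, because a block absorbs every path of `G - C`
between two of its vertices; so the contraction of `u, v` is admissible in `B` and yields a
supergraph of `K`.
-/

open Relation

namespace SimpleGraph

variable {V : Type*}

lemma Reachable.of_forall_adj {Γ Γ' : SimpleGraph V}
    (h : ∀ a b, Γ.Adj a b → Γ'.Reachable a b) {a b : V} (hab : Γ.Reachable a b) :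
    Γ'.Reachable a b := by
  rw [reachable_iff_reflTransGen] at hab ⊢
  exact hab.lift' id fun a b hab => (reachable_iff_reflTransGen a b).1 (h a b hab)

open Finset in
lemma even_sum_card_filter_adj (Γ : SimpleGraph V)
    [DecidableRel Γ.Adj] (F : Finset V) : Even (∑ z ∈ F, #{y ∈ F | Γ.Adj z y}) := by
  have hdeg : ∀ z : F, #{y ∈ F | Γ.Adj z y} = (Γ.induce (F : Set V)).degree z := by
    intro z
    rw [← card_neighborFinset_eq_degree]
    refine card_bij (fun y hy => ⟨y, (mem_filter.1 hy).1⟩) ?_ ?_ ?_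
    · intro y hy; simpa using (mem_filter.1 hy).2
    · intro a _ b _ h; simpa using h
    · intro b hb; exact ⟨b, by simpa using hb, rfl⟩
  rw [← sum_coe_sort F, Fintype.sum_congr _ _ hdeg, sum_degrees_eq_twice_card_edges]
  exact even_two_mul _

open Finset in
lemma even_card_filter_adj_of_closed [DecidableEq V] (Γ : SimpleGraph V)
    [DecidableRel Γ.Adj] {C A : Finset V} {x : V} (hdeg : ∀ z ∈ C, Even #{y ∈ C | Γ.Adj z y})
    (hAC : A ⊆ C) (hx : x ∈ C) (hxA : x ∉ A)
    (hclosed : ∀ z ∈ A, ∀ y ∈ C, Γ.Adj z y → y ≠ x → y ∈ A) : Even #{z ∈ A | Γ.Adj x z} := by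
  have hsplit : ∀ z ∈ A,
      #{y ∈ C | Γ.Adj z y} = #{y ∈ A | Γ.Adj z y} + if Γ.Adj x z then 1 else 0 := by
    intro z hz
    have : {y ∈ C | Γ.Adj z y} = {y ∈ insert x A | Γ.Adj z y} := by
      ext y
      simp only [mem_filter, mem_insert]
      refine ⟨fun ⟨hy, hzy⟩ => ⟨?_, hzy⟩, fun ⟨hy, hzy⟩ => ⟨?_, hzy⟩⟩
      · by_cases hyx : y = x
        exacts [Or.inl hyx, Or.inr (hclosed z hz y hy hzy hyx)]
      · rcases hy with rfl | hy
        exacts [hx, hAC hy]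
    rw [this, filter_insert]
    by_cases hxz : Γ.Adj x z
    · rw [if_pos hxz.symm, if_pos hxz, card_insert_of_notMem fun h => hxA (mem_filter.1 h).1]
    · rw [if_neg (mt Adj.symm hxz), if_neg hxz, add_zero]
  have hsum := sum_congr rfl hsplit
  rw [sum_add_distrib, ← card_filter] at hsum
  have := even_sum _ fun z hz => hdeg z (hAC hz)
  rw [hsum, Nat.even_add] at this
  exact this.1 (Γ.even_sum_card_filter_adj A)

lemma Walk.IsPath.notMem_support_dropUntil [DecidableEq V]
    {Γ : SimpleGraph V} {u v w x : V} {p : Γ.Walk u w} (hp : p.IsPath) (hv : v ∈ p.support)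
    (hx : x ∈ (p.takeUntil v hv).support) (hxv : x ≠ v) : x ∉ (p.dropUntil v hv).support := by
  have hnodup := hp.support_nodup
  rw [← p.take_spec hv, Walk.support_append] at hnodup
  intro hx'
  rw [← Walk.cons_tail_support] at hx'
  rcases List.mem_cons.1 hx' with rfl | hx'
  · exact hxv rfl
  · exact List.disjoint_of_nodup_append hnodup hx hx'

namespace Subgraph

variable {G : SimpleGraph V} {K : G.Subgraph}

lemma reachable_spanningCoe_iff {x y : V} (hx : x ∈ K.verts) (hy : y ∈ K.verts) :
    K.spanningCoe.Reachable x y ↔ K.coe.Reachable ⟨x, hx⟩ ⟨y, hy⟩ := by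
  refine ⟨fun h => ?_, fun h => h.map K.coeEmbeddingSpanningCoe.toHom⟩
  rw [reachable_iff_reflTransGen] at h
  induction h using Relation.ReflTransGen.head_induction_on with
  | refl => rfl
  | head hxz _ ih =>
    exact (Adj.reachable (G := K.coe) (u := ⟨_, hx⟩) (v := ⟨_, K.edge_vert hxz.symm⟩) hxz).trans
      (ih _)

lemma preconnected_coe_iff :
    K.coe.Preconnected ↔ ∀ x ∈ K.verts, ∀ y ∈ K.verts, K.spanningCoe.Reachable x y := by
  simp only [Preconnected, Subtype.forall]
  exact forall₄_congr fun x hx y hy => (reachable_spanningCoe_iff hx hy).symm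

lemma connected_coe_iff : K.coe.Connected ↔
    K.verts.Nonempty ∧ ∀ x ∈ K.verts, ∀ y ∈ K.verts, K.spanningCoe.Reachable x y := by
  rw [connected_iff, preconnected_coe_iff, Set.nonempty_coe_sort, and_comm]

lemma connected_coe_of_forall_reachable {h : V} (hh : h ∈ K.verts)
    (hreach : ∀ x ∈ K.verts, K.spanningCoe.Reachable x h) : K.coe.Connected :=
  connected_coe_iff.2 ⟨⟨h, hh⟩, fun x hx y hy => (hreach x hx).trans (hreach y hy).symm⟩

lemma deleteVerts_induce (W s : Set V) : (K.induce W).deleteVerts s = K.induce (W \ s) := by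
  ext <;> simp [and_assoc, and_left_comm]

lemma reachable_induce_of_support_subset {W : Set V} {a b : V} (p : K.spanningCoe.Walk a b)
    (hp : ∀ v ∈ p.support, v ∈ W) : (K.induce W).spanningCoe.Reachable a b := by
  refine ⟨p.transfer _ fun e he => ?_⟩
  induction e using Sym2.ind with
  | h x y =>
    exact ⟨hp x (p.fst_mem_support_of_mem_edges he), hp y (p.snd_mem_support_of_mem_edges he),
      p.adj_of_mem_edges he⟩

lemma mem_verts_of_mem_support {a b v : V} (p : K.spanningCoe.Walk a b) (ha : a ∈ K.verts)
    (hv : v ∈ p.support) : v ∈ K.verts := by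
  induction p with
  | nil => rwa [Walk.mem_support_nil_iff.1 hv]
  | cons h _ ih =>
    rcases List.mem_cons.1 (Walk.support_cons _ _ ▸ hv) with rfl | hv
    exacts [ha, ih (K.edge_vert h.symm) hv]

lemma induce_induce_of_subset {S C : Set V} (hCS : C ⊆ S) : (K.induce S).induce C = K.induce C := by
  ext x y
  · rfl
  · simp only [induce_adj]
    exact ⟨fun h => ⟨h.1, h.2.1, h.2.2.2.2⟩, fun h => ⟨h.1, h.2.1, hCS h.1, hCS h.2.1, h.2.2⟩⟩

lemma induce_le {S : Set V} (hS : S ⊆ K.verts) : K.induce S ≤ K :=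
  ⟨hS, fun _ _ h => h.2.2⟩

lemma edgeSet_finite (hfin : K.verts.Finite) : K.edgeSet.Finite :=
  hfin.toFinset.sym2.finite_toSet.subset fun _ he =>
    Finset.mem_sym2_iff.2 fun _ hv => hfin.mem_toFinset.2 (K.mem_verts_of_mem_edge he hv)

end Subgraph

end SimpleGraph

lemma ncompFG_eq_one {K : FG} (h : K.coe.Connected) : ncompFG K = 1 :=
  have := h.preconnected.subsingleton_connectedComponent
  have := h.nonempty
  Nat.card_unique

lemma ncompFG_le_one {K : FG} (h : K.coe.Preconnected) : ncompFG K ≤ 1 := by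
  have := h.subsingleton_connectedComponent
  rcases isEmpty_or_nonempty K.coe.ConnectedComponent with _ | _
  · simp [ncompFG]
  · exact Nat.card_unique.le

/-- The components of `K - C` map onto those of `K` (each vertex of `C` is joined to `y`), and a
surjection between finite sets that does not increase the cardinality is injective. -/
lemma reachable_deleteVerts_of_nonSeparating {K : FG} (hfin : K.verts.Finite) {C : Set ℕ}
    (hC : NonSeparatingFG K C) {y z : ℕ} (hy : y ∈ K.verts \ C) (hz : z ∈ K.verts \ C)
    (hyz : K.spanningCoe.Reachable y z) (hCy : ∀ c ∈ C ∩ K.verts, K.spanningCoe.Reachable c y) :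
    (K.deleteVerts C).spanningCoe.Reachable y z := by
  have : Finite K.verts := hfin.to_subtype
  have : Finite (K.deleteVerts C).verts := (hfin.subset Set.sdiff_subset).to_subtype
  let f := ConnectedComponent.map (Subgraph.inclusion (Subgraph.deleteVerts_le (G' := K) (s := C)))
  have hsurj : Function.Surjective f := by
    refine ConnectedComponent.ind fun p => ?_
    by_cases hp : p.1 ∈ C
    · refine ⟨(K.deleteVerts C).coe.connectedComponentMk ⟨y, hy⟩, ?_⟩
      refine ConnectedComponent.eq.2 ((Subgraph.reachable_spanningCoe_iff hy.1 p.2).1 ?_)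
      exact (hCy p.1 ⟨hp, p.2⟩).symm
    · exact ⟨(K.deleteVerts C).coe.connectedComponentMk ⟨p.1, p.2, hp⟩, rfl⟩
  have hinj := (hsurj.bijective_of_nat_card_le hC).1
  have hfyz : f ((K.deleteVerts C).coe.connectedComponentMk ⟨y, hy⟩) =
      f ((K.deleteVerts C).coe.connectedComponentMk ⟨z, hz⟩) :=
    ConnectedComponent.eq.2 ((Subgraph.reachable_spanningCoe_iff hy.1 hz.1).1 hyz)
  exact (Subgraph.reachable_spanningCoe_iff hy hz).2 (ConnectedComponent.eq.1 (hinj hfyz))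

lemma reflTransGen_bStep_deleteVerts (K : FG) {S : Set ℕ} (hS : S.Finite) :
    ReflTransGen BStep K (K.deleteVerts S) := by
  induction S, hS using Set.Finite.induction_on with
  | empty => rw [Subgraph.deleteVerts_empty]
  | @insert v S _ _ ih =>
    rw [Set.insert_eq, Set.union_comm, ← Subgraph.deleteVerts_deleteVerts]
    exact ih.tail (BStep.deleteVert _ v)

lemma reflTransGen_bStep_deleteEdges (K : FG) {E : Set (Sym2 ℕ)} (hE : E.Finite) :
    ReflTransGen BStep K (K.deleteEdges E) := by
  induction E, hE using Set.Finite.induction_on with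
  | empty => rw [Subgraph.deleteEdges_empty_eq]
  | @insert e E _ _ ih =>
    rw [Set.insert_eq, Set.union_comm, ← Subgraph.deleteEdges_deleteEdges]
    exact ih.tail (BStep.deleteEdge _ e)

lemma eq_deleteVerts_deleteEdges_of_le {K K' : FG} (hle : K' ≤ K) :
    K' = (K.deleteEdges (K.edgeSet \ K'.edgeSet)).deleteVerts (K.verts \ K'.verts) := by
  ext x y
  · simpa using fun hx => hle.1 hx
  · simp only [Subgraph.deleteVerts_adj, Subgraph.deleteEdges_adj, Subgraph.deleteEdges_verts,
      Set.mem_sdiff, Subgraph.mem_edgeSet, not_and, not_not]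
    exact ⟨fun h => ⟨hle.1 (K'.edge_vert h), fun _ => K'.edge_vert h, hle.1 (K'.edge_vert h.symm),
      fun _ => K'.edge_vert h.symm, hle.2 h, fun _ => h⟩, fun h => h.2.2.2.2.2 h.2.2.2.2.1⟩

lemma reflTransGen_bStep_of_le {K K' : FG} (hfin : K.verts.Finite) (hle : K' ≤ K) :
    ReflTransGen BStep K K' := by
  rw [eq_deleteVerts_deleteEdges_of_le hle]
  exact (reflTransGen_bStep_deleteEdges K ((Subgraph.edgeSet_finite hfin).subset
    Set.sdiff_subset)).trans (reflTransGen_bStep_deleteVerts _ (hfin.subset Set.sdiff_subset))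

lemma TwoConnectedFG.connected {K : FG} (h : TwoConnectedFG K) : K.coe.Connected := by
  have := h ∅ Set.subsingleton_empty
  rwa [Subgraph.deleteVerts_empty] at this

lemma TwoConnectedFG.of_iso {K L : FG} (φ : K.coe ≃g L.coe) (hL : TwoConnectedFG L) :
    TwoConnectedFG K := by
  intro U hU
  set U' : Set ℕ := {w | ∃ v : K.verts, ↑v ∈ U ∧ ↑(φ v) = w}
  have hU' : U'.Subsingleton := by
    rintro _ ⟨v, hv, rfl⟩ _ ⟨v', hv', rfl⟩
    rw [Subtype.val_injective (hU hv hv')]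
  have hbij : Set.BijOn φ {v | ↑v ∉ U} {w | ↑w ∉ U'} := by
    refine ⟨fun v hv ⟨v', hv', hvv'⟩ => hv ?_, φ.injective.injOn, fun w hw => ?_⟩
    · rwa [← φ.injective (Subtype.val_injective hvv')]
    · exact ⟨φ.symm w, fun h => hw ⟨_, h, by simp⟩, by simp⟩
  exact (Iso.connected_iff (((Subgraph.coeDeleteVertsIso U).trans (φ.induce hbij)).trans
    (Subgraph.coeDeleteVertsIso U').symm)).2 (hL U' hU')

lemma TwoConnectedFG.mono {K L : FG} (hle : K ≤ L) (hv : K.verts = L.verts)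
    (h : TwoConnectedFG K) : TwoConnectedFG L := fun U hU =>
  ((⟨h U hU⟩ : (K.deleteVerts U).Connected).mono (Subgraph.deleteVerts_mono hle)
    (by simp only [Subgraph.deleteVerts_verts, hv])).coe

lemma twoConnectedFG_of_forall_deleteVerts {K : FG} (hfin : K.verts.Finite)
    (h : ∀ x, (K.deleteVerts {x}).coe.Connected) : TwoConnectedFG K := by
  intro U hU
  rcases hU.eq_empty_or_singleton with rfl | ⟨x, rfl⟩
  · obtain ⟨x, hx⟩ := hfin.infinite_compl.nonempty
    have := h x
    rwa [← Subgraph.deleteVerts_inter_verts_left_eq, Set.inter_singleton_eq_empty.2 hx] at this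
  · exact h x

lemma setOf_le_finite {G : FG} (hG : G.verts.Finite) : {B : FG | B ≤ G}.Finite := by
  have hinj : Function.Injective fun B : FG => (B.verts, B.edgeSet) := fun B B' h => by
    simp only [Prod.mk.injEq] at h
    ext x y
    · rw [h.1]
    · rw [← Subgraph.mem_edgeSet, ← Subgraph.mem_edgeSet, h.2]
  exact ((hG.finite_subsets.prod (Subgraph.edgeSet_finite hG).finite_subsets).preimage
    hinj.injOn).subset fun B hB => ⟨hB.1, Subgraph.edgeSet_mono hB⟩

lemma exists_isBlockFG_le {G K : FG} (hG : G.verts.Finite) (hKG : K ≤ G)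
    (hK : TwoConnectedFG K) : ∃ B, K ≤ B ∧ IsBlockFG G B := by
  obtain ⟨B, hKB, hB⟩ := ((setOf_le_finite hG).subset fun B (hB : B ≤ G ∧ TwoConnectedFG B) =>
    hB.1).exists_le_maximal (show K ∈ {B | B ≤ G ∧ TwoConnectedFG B} from ⟨hKG, hK⟩)
  exact ⟨B, hKB, hB.1.1, hB.1.2, fun B' hBB' hB'G hB' => le_antisymm (hB.2 ⟨hB'G, hB'⟩ hBB') hBB'⟩

lemma IsBlockFG.induce_verts_eq {G B : FG} (hB : IsBlockFG G B) : G.induce B.verts = B := by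
  have hle : B ≤ G.induce B.verts := by
    conv_lhs => rw [← Subgraph.induce_self_verts (G' := B)]
    exact Subgraph.induce_mono_left hB.1
  exact hB.2.2 _ hle ⟨fun _ hx => hB.1.1 hx, fun _ _ h => h.2.2⟩ (hB.2.1.mono hle rfl)

lemma IsBlockFG.adj {G B : FG} (hB : IsBlockFG G B) {a b : ℕ} (ha : a ∈ B.verts)
    (hb : b ∈ B.verts) (h : G.Adj a b) : B.Adj a b :=
  hB.induce_verts_eq ▸ ⟨ha, hb, h⟩

lemma TwoConnectedFG.induce_union_support {G B : FG} (hG : G.verts.Finite) (hBG : B ≤ G)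
    (hB : TwoConnectedFG B) {y z : ℕ} (hy : y ∈ B.verts) (hz : z ∈ B.verts)
    {p : G.spanningCoe.Walk y z} (hp : p.IsPath) :
    TwoConnectedFG (G.induce (B.verts ∪ {v | v ∈ p.support})) := by
  classical
  set S := {v | v ∈ p.support}
  refine twoConnectedFG_of_forall_deleteVerts (hG.subset ?_) fun x => ?_
  · rintro v (hv | hv)
    exacts [hBG.1 hv, Subgraph.mem_verts_of_mem_support p (hBG.1 hy) hv]
  rw [Subgraph.deleteVerts_induce]
  set W := (B.verts ∪ S) \ {x}
  obtain ⟨h, hh⟩ := (Subgraph.connected_coe_iff.1 (hB {x} Set.subsingleton_singleton)).1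
  have hBW : B.deleteVerts {x} ≤ G.induce W :=
    ⟨fun v hv => ⟨Or.inl hv.1, hv.2⟩, fun a b hab =>
      ⟨⟨Or.inl hab.1.1, hab.1.2⟩, ⟨Or.inl hab.2.1.1, hab.2.1.2⟩, hBG.2 hab.2.2⟩⟩
  have hreachB : ∀ v ∈ (B.deleteVerts {x}).verts, (G.induce W).spanningCoe.Reachable v h :=
    fun v hv => ((Subgraph.connected_coe_iff.1 (hB {x} Set.subsingleton_singleton)).2 v hv h
      hh).mono (Subgraph.spanningCoe_le_of_le hBW)
  -- `p` is a path, so one of its two parts at `v` avoids `x`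
  have hreachS : ∀ v ∈ S, v ≠ x → (G.induce W).spanningCoe.Reachable v h := by
    intro v hv hvx
    have hsub : ∀ {a b} (q : G.spanningCoe.Walk a b), (∀ t ∈ q.support, t ∈ p.support) →
        x ∉ q.support → ∀ t ∈ q.support, t ∈ W := fun q hq hxq t ht =>
      ⟨Or.inr (hq t ht), fun htx => hxq (htx ▸ ht)⟩
    by_cases hx : x ∈ (p.takeUntil v hv).support
    · have hxd := hp.notMem_support_dropUntil hv hx hvx.symm
      refine (Subgraph.reachable_induce_of_support_subset _ (hsub _ (fun t ht =>
        p.support_dropUntil_subset_support hv ht) hxd)).trans (hreachB z ⟨hz, ?_⟩)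
      exact fun hzx => hxd (hzx ▸ Walk.end_mem_support _)
    · refine (Subgraph.reachable_induce_of_support_subset _ (hsub _ (fun t ht =>
        p.support_takeUntil_subset_support hv ht) hx)).symm.trans (hreachB y ⟨hy, ?_⟩)
      exact fun hyx => hx (hyx ▸ Walk.start_mem_support _)
  refine Subgraph.connected_coe_of_forall_reachable (hBW.1 hh) ?_
  rintro v ⟨hv | hv, hvx⟩
  exacts [hreachB v ⟨hv, hvx⟩, hreachS v hv hvx]

lemma IsBlockFG.reachable_deleteVerts {G B : FG} (hG : G.verts.Finite) (hB : IsBlockFG G B)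
    {C : Set ℕ} {y z : ℕ} (hy : y ∈ B.verts) (hz : z ∈ B.verts)
    (hyz : (G.deleteVerts C).spanningCoe.Reachable y z) :
    (B.deleteVerts C).spanningCoe.Reachable y z := by
  classical
  obtain ⟨q⟩ := hyz
  have hGC : (G.deleteVerts C).spanningCoe ≤ G.spanningCoe :=
    Subgraph.spanningCoe_le_of_le Subgraph.deleteVerts_le
  -- by maximality of the block, the path `q.bypass` already lies in `B`
  have hsupp : ∀ v ∈ q.bypass.support, v ∈ B.verts := by
    have hear := hB.2.1.induce_union_support hG hB.1 hy hz (q.bypass_isPath.mapLe hGC)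
    rw [Walk.support_mapLe_eq_support] at hear
    have hle : G.induce (B.verts ∪ {v | v ∈ q.bypass.support}) ≤ G := by
      refine Subgraph.induce_le (Set.union_subset hB.1.1 fun v hv => ?_)
      exact Subgraph.mem_verts_of_mem_support (q.bypass.mapLe hGC) (hB.1.1 hy)
        (by rwa [Walk.support_mapLe_eq_support])
    have heq := hB.2.2 _ (hB.induce_verts_eq ▸ Subgraph.induce_mono_right Set.subset_union_left)
      hle hear
    exact fun v hv => heq ▸ Or.inr hv
  refine (Subgraph.reachable_induce_of_support_subset _ hsupp).mono fun a b hab => ?_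
  obtain ⟨ha, hb, haC, hbC, hab⟩ : a ∈ B.verts ∧ b ∈ B.verts ∧ a ∉ C ∧ b ∉ C ∧ G.Adj a b :=
    ⟨hab.1, hab.2.1, hab.2.2.1.2, hab.2.2.2.1.2, hab.2.2.2.2⟩
  exact ⟨⟨ha, haC⟩, ⟨hb, hbC⟩, hB.adj ha hb hab⟩

lemma IsBlockFG.nonSeparatingFG {G B : FG} (hG : G.verts.Finite) (hB : IsBlockFG G B)
    {C : Set ℕ} (hC : NonSeparatingFG G C) (hCB : C ⊆ B.verts) : NonSeparatingFG B C := by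
  rw [NonSeparatingFG, ncompFG_eq_one hB.2.1.connected]
  refine ncompFG_le_one (Subgraph.preconnected_coe_iff.2 fun p hp q hq => ?_)
  have hreach : ∀ a ∈ B.verts, ∀ b ∈ B.verts, G.spanningCoe.Reachable a b :=
    fun a ha b hb => ((Subgraph.connected_coe_iff.1 hB.2.1.connected).2 a ha b hb).mono
      (Subgraph.spanningCoe_le_of_le hB.1)
  exact hB.reachable_deleteVerts hG hp.1 hq.1 (reachable_deleteVerts_of_nonSeparating hG hC
    ⟨hB.1.1 hp.1, hp.2⟩ ⟨hB.1.1 hq.1, hq.2⟩ (hreach p hp.1 q hq.1)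
    fun c hc => hreach c (hCB hc.1) p hp.1)

lemma IsInducedCycleFG.induce {G : FG} {C S : Set ℕ} (h : IsInducedCycleFG G C) (hCS : C ⊆ S) :
    IsInducedCycleFG (G.induce S) C := by
  obtain ⟨-, hfin, hcard, hconn, hdeg⟩ := h
  refine ⟨hCS, hfin, hcard, by rwa [Subgraph.induce_induce_of_subset hCS], fun x hx => ?_⟩
  convert hdeg x hx using 2
  ext y
  exact ⟨fun h => ⟨h.1, h.2.2.2⟩, fun h => ⟨h.1, hCS hx, hCS h.1, h.2⟩⟩

open Finset in
lemma IsInducedCycleFG.reachable_induce_sdiff_of_adj {G : FG} {C : Set ℕ}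
    (h : IsInducedCycleFG G C) {x w n : ℕ} (hxC : x ∈ C) (hw : w ∈ C \ {x}) (hn : n ∈ C)
    (hxn : G.Adj x n) : (G.induce (C \ {x})).spanningCoe.Reachable w n := by
  classical
  obtain ⟨-, hfin, -, hconn, hdeg⟩ := h
  set F := hfin.toFinset
  have hF : ∀ z ∈ C, #{y ∈ F | G.Adj z y} = 2 := fun z hz => by
    rw [← hdeg z hz, ← Set.ncard_coe_finset]
    congr 1
    ext y
    simp [F]
  let comp : Finset ℕ := {z ∈ F | z ≠ x ∧ (G.induce (C \ {x})).spanningCoe.Reachable w z}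
  have hclosed : ∀ z ∈ comp, ∀ y ∈ F, G.Adj z y → y ≠ x → y ∈ comp := by
    intro z hz y hy hzy hyx
    obtain ⟨hzF, hzx, hwz⟩ := mem_filter.1 hz
    refine mem_filter.2 ⟨hy, hyx, hwz.trans (Adj.reachable ?_)⟩
    exact ⟨⟨hfin.mem_toFinset.1 hzF, hzx⟩, ⟨hfin.mem_toFinset.1 hy, hyx⟩, hzy⟩
  have hmeets : ∃ m ∈ comp, G.Adj x m := by
    obtain ⟨p⟩ := (Subgraph.connected_coe_iff.1 hconn).2 w hw.1 x hxC
    obtain ⟨d, -, hd, hd'⟩ := p.exists_boundary_dart (comp : Set ℕ)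
      (mem_filter.2 ⟨hfin.mem_toFinset.2 hw.1, hw.2, Reachable.rfl⟩)
      (fun h => (mem_filter.1 h).2.1 rfl)
    have hadj : d.fst ∈ C ∧ d.snd ∈ C ∧ G.Adj d.fst d.snd := d.adj
    have hdx : d.snd = x := by
      by_contra hdx
      exact hd' (hclosed _ hd _ (hfin.mem_toFinset.2 hadj.2.1) hadj.2.2 hdx)
    exact ⟨d.fst, hd, hdx ▸ hadj.2.2.symm⟩
  -- by parity, `comp` contains both neighbours of `x` on the cycle
  have hall : {z ∈ F | G.Adj x z} ⊆ comp := by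
    have heven : Even #{z ∈ comp | G.Adj x z} :=
      G.spanningCoe.even_card_filter_adj_of_closed (C := F)
        (fun z hz => (hF z (hfin.mem_toFinset.1 hz)).symm ▸ even_two)
        (filter_subset _ _) (hfin.mem_toFinset.2 hxC) (fun h => (mem_filter.1 h).2.1 rfl)
        hclosed
    have hsub : {z ∈ comp | G.Adj x z} ⊆ {z ∈ F | G.Adj x z} :=
      filter_subset_filter _ (filter_subset _ _)
    obtain ⟨m, hm, hxm⟩ := hmeets
    have hpos : 0 < #{z ∈ comp | G.Adj x z} := card_pos.2 ⟨m, mem_filter.2 ⟨hm, hxm⟩⟩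
    have hle := card_le_card hsub
    rw [hF x hxC] at hle
    rw [← eq_of_subset_of_card_le hsub (by rw [hF x hxC]; obtain ⟨k, hk⟩ := heven; omega)]
    exact filter_subset _ _
  exact (mem_filter.1 (hall (mem_filter.2 ⟨hfin.mem_toFinset.2 hn, hxn⟩))).2.2

lemma IsInducedCycleFG.reachable_induce_sdiff {G : FG} {C : Set ℕ} (h : IsInducedCycleFG G C)
    {x a b : ℕ} (ha : a ∈ C \ {x}) (hb : b ∈ C \ {x}) :
    (G.induce (C \ {x})).spanningCoe.Reachable a b := by
  by_cases hxC : x ∈ C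
  · obtain ⟨n, hn, hxn⟩ : {y | y ∈ C ∧ G.Adj x y}.Nonempty :=
      Set.nonempty_of_ncard_ne_zero (by rw [h.2.2.2.2 x hxC]; norm_num)
    exact (h.reachable_induce_sdiff_of_adj hxC ha hn hxn).trans
      (h.reachable_induce_sdiff_of_adj hxC hb hn hxn).symm
  · rw [Set.sdiff_singleton_eq_self hxC]
    exact (Subgraph.connected_coe_iff.1 h.2.2.2.1).2 a ha.1 b hb.1

def relabelFG (σ : Equiv.Perm ℕ) (K : FG) : FG where
  verts := σ '' K.verts
  Adj x y := K.Adj (σ.symm x) (σ.symm y)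
  adj_sub h := (top_adj _ _).2 fun hxy => (top_adj _ _).1 (K.adj_sub h) (congrArg σ.symm hxy)
  edge_vert {x _} h := ⟨σ.symm x, K.edge_vert h, σ.apply_symm_apply x⟩
  symm := ⟨fun _ _ h => h.symm⟩

section Relabel

variable (σ : Equiv.Perm ℕ) (K : FG)

@[simp]
lemma relabelFG_verts : (relabelFG σ K).verts = σ '' K.verts := rfl

@[simp]
lemma relabelFG_adj {x y : ℕ} : (relabelFG σ K).Adj x y ↔ K.Adj (σ.symm x) (σ.symm y) := Iff.rfl

def relabelFGIso : K.coe ≃g (relabelFG σ K).coe where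
  toEquiv := Equiv.image σ K.verts
  map_rel_iff' {a b} := by
    change K.Adj (σ.symm (σ a)) (σ.symm (σ b)) ↔ _
    simp only [Equiv.symm_apply_apply]
    rfl

lemma relabelFG_deleteVerts (S : Set ℕ) :
    relabelFG σ (K.deleteVerts S) = (relabelFG σ K).deleteVerts (σ '' S) := by
  ext x y
  · simp only [relabelFG_verts, Subgraph.deleteVerts_verts, Set.image_sdiff σ.injective]
  · simp only [relabelFG_adj, Subgraph.deleteVerts_adj, relabelFG_verts, Set.mem_image_equiv]

lemma relabelFG_deleteEdges (e : Sym2 ℕ) :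
    relabelFG σ (K.deleteEdges {e}) = (relabelFG σ K).deleteEdges {e.map σ} := by
  ext x y
  · rfl
  · simp only [relabelFG_adj, Subgraph.deleteEdges_adj, Set.mem_singleton_iff]
    have key : s(σ.symm x, σ.symm y) = e ↔ s(x, y) = e.map σ := by
      constructor
      · rintro rfl
        simp
      · intro h
        rw [← Sym2.map_mk, h, Sym2.map_map]
        simp
    rw [key]

lemma relabelFG_contractFG (u v : ℕ) :
    relabelFG σ (contractFG K u v) = contractFG (relabelFG σ K) (σ u) (σ v) := by
  ext x y
  · change x ∈ σ '' (K.verts \ {v}) ↔ x ∈ σ '' K.verts \ {σ v}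
    rw [Set.image_sdiff σ.injective, Set.image_singleton]
  · change (contractFG K u v).Adj (σ.symm x) (σ.symm y) ↔ _
    simp only [contractFG, relabelFG_adj, relabelFG_verts, ne_eq, Set.mem_image_equiv,
      Equiv.symm_apply_apply, Equiv.symm_apply_eq, Equiv.apply_symm_apply]

lemma relabelFG_induce (C : Set ℕ) :
    relabelFG σ (K.induce C) = (relabelFG σ K).induce (σ '' C) := by
  ext x y
  · rfl
  · simp only [relabelFG_adj, Subgraph.induce_adj, Set.mem_image_equiv]

variable {σ K}

lemma TwoConnectedFG.relabel (h : TwoConnectedFG K) : TwoConnectedFG (relabelFG σ K) :=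
  h.of_iso (relabelFGIso σ K).symm

lemma IsInducedCycleFG.relabel {C : Set ℕ} (h : IsInducedCycleFG K C) :
    IsInducedCycleFG (relabelFG σ K) (σ '' C) := by
  obtain ⟨hsub, hfin, hcard, hconn, hdeg⟩ := h
  refine ⟨Set.image_mono hsub, hfin.image _, ?_, ?_, ?_⟩
  · rwa [Set.ncard_image_of_injective _ σ.injective]
  · rw [← relabelFG_induce]
    exact (Iso.connected_iff (relabelFGIso σ _)).1 hconn
  · rintro _ ⟨x, hx, rfl⟩
    have : {y | y ∈ σ '' C ∧ (relabelFG σ K).Adj (σ x) y} = σ '' {y | y ∈ C ∧ K.Adj x y} := by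
      ext y
      simp only [Set.mem_ofPred_eq, relabelFG_adj, Set.mem_image_equiv, Equiv.symm_apply_apply]
    rw [this, Set.ncard_image_of_injective _ σ.injective]
    exact hdeg x hx

lemma NonSeparatingFG.relabel {C : Set ℕ} (h : NonSeparatingFG K C) :
    NonSeparatingFG (relabelFG σ K) (σ '' C) := by
  rwa [NonSeparatingFG, ← relabelFG_deleteVerts, ncompFG, ncompFG,
    ← Nat.card_congr (relabelFGIso σ _).connectedComponentEquiv,
    ← Nat.card_congr (relabelFGIso σ _).connectedComponentEquiv]

lemma AdmissiblePair.relabel {u v : ℕ} (h : AdmissiblePair K u v) :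
    AdmissiblePair (relabelFG σ K) (σ u) (σ v) := by
  obtain ⟨huv, w, huw, hwv, C, huC, hwC, hvC, hcyc, hsep⟩ := h
  refine ⟨σ.injective.ne huv, σ w, ?_, ?_, σ '' C, ⟨u, huC, rfl⟩, ⟨w, hwC, rfl⟩, ⟨v, hvC, rfl⟩,
    hcyc.relabel, hsep.relabel⟩ <;>
  simpa [relabelFG_adj]

lemma BStep.relabel {K' : FG} (h : BStep K K') : BStep (relabelFG σ K) (relabelFG σ K') := by
  cases h with
  | deleteVert v =>
    rw [relabelFG_deleteVerts, Set.image_singleton]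
    exact .deleteVert _ (σ v)
  | deleteEdge e =>
    rw [relabelFG_deleteEdges]
    exact .deleteEdge _ (e.map σ)
  | contract u v h =>
    rw [relabelFG_contractFG]
    exact .contract _ (σ u) (σ v) h.relabel

lemma BipMinor.relabel {H : FG} (h : BipMinor H K) : BipMinor H (relabelFG σ K) := by
  obtain ⟨H', hsteps, ⟨φ⟩⟩ := h
  exact ⟨relabelFG σ H', hsteps.lift _ fun _ _ h => h.relabel,
    ⟨(relabelFGIso σ H').symm.trans φ⟩⟩

end Relabel

section Contraction

variable {G K : FG} {u v : ℕ} {W : Set ℕ}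

lemma contractFG_adj_of_ne {a b : ℕ} (h : (contractFG G u v).Adj a b) (ha : a ≠ u) (hb : b ≠ u) :
    G.Adj a b := by
  obtain ⟨-, -, -, h | ⟨rfl, -⟩ | ⟨rfl, -⟩⟩ := h
  exacts [h, absurd rfl ha, absurd rfl hb]

lemma le_of_le_contractFG (hK : K ≤ contractFG G u v) (hu : ∀ z, K.Adj u z → G.Adj u z) :
    K ≤ G := by
  refine ⟨fun x hx => (hK.1 hx).1, fun a b hab => ?_⟩
  by_cases ha : a = u
  · exact ha ▸ hu b (ha ▸ hab)
  by_cases hb : b = u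
  · exact (hb ▸ hu a (hb ▸ hab.symm)).symm
  exact contractFG_adj_of_ne (hK.2 hab) ha hb

lemma relabelFG_swap_le (hK : K ≤ contractFG G u v) (hv : v ∈ G.verts)
    (hu : ∀ z, K.Adj u z → G.Adj v z) : relabelFG (Equiv.swap u v) K ≤ G := by
  have hKv : ∀ a ∈ K.verts, a ≠ v := fun a ha h => (hK.1 ha).2 h
  have hstep : ∀ a b, K.Adj a b → b ≠ u → G.Adj (Equiv.swap u v a) (Equiv.swap u v b) := by
    intro a b hab hbu
    rw [Equiv.swap_apply_of_ne_of_ne hbu (hKv b (K.edge_vert hab.symm))]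
    by_cases hau : a = u
    · rw [hau, Equiv.swap_apply_left]
      exact hu b (hau ▸ hab)
    · rw [Equiv.swap_apply_of_ne_of_ne hau (hKv a (K.edge_vert hab))]
      exact contractFG_adj_of_ne (hK.2 hab) hau hbu
  refine ⟨?_, fun a b hab => ?_⟩
  · rintro _ ⟨s, hs, rfl⟩
    by_cases hsu : s = u
    · rwa [hsu, Equiv.swap_apply_left]
    · rw [Equiv.swap_apply_of_ne_of_ne hsu (hKv s hs)]
      exact (hK.1 hs).1
  rw [relabelFG_adj, Equiv.symm_swap] at hab
  rw [← Equiv.swap_apply_self u v a, ← Equiv.swap_apply_self u v b]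
  by_cases hbu : Equiv.swap u v b = u
  · refine (hstep _ _ hab.symm ?_).symm
    exact fun hau => (top_adj _ _).1 (K.adj_sub hab) (hau.trans hbu.symm)
  · exact hstep _ _ hab hbu

lemma le_contractFG_induce {S : Set ℕ} (hK : K ≤ contractFG G u v) (hKS : K.verts ⊆ S)
    (hv : v ∈ S) : K ≤ contractFG (G.induce S) u v := by
  refine ⟨fun x hx => ⟨hKS hx, (hK.1 hx).2⟩, fun a b hab => ?_⟩
  have ha := hKS (K.edge_vert hab)
  have hb := hKS (K.edge_vert hab.symm)
  obtain ⟨hab', hav, hbv, h | ⟨rfl, -, h⟩ | ⟨rfl, -, h⟩⟩ := hK.2 hab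
  · exact ⟨hab', hav, hbv, Or.inl ⟨ha, hb, h⟩⟩
  · exact ⟨hab', hav, hbv, Or.inr (Or.inl ⟨rfl, ha, hv, hb, h⟩)⟩
  · exact ⟨hab', hav, hbv, Or.inr (Or.inr ⟨rfl, hb, ha, hv, h⟩)⟩

lemma spanningCoe_deleteVerts_le_of_le_contractFG (hKG : K ≤ contractFG G u v)
    (hKW : K.verts \ {u} ⊆ W) : (K.deleteVerts {u}).spanningCoe ≤ (G.induce W).spanningCoe := by
  rintro a b ⟨ha, hb, hab⟩
  exact ⟨hKW ha, hKW hb, contractFG_adj_of_ne (hKG.2 hab) ha.2 hb.2⟩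

/-- An edge of `G/uv` at the merged vertex comes from an edge of `G` at `u` or at `v`, so it lifts
to a path of `G` once `u` and `v` are joined. -/
lemma reachable_induce_of_le_contractFG {x : ℕ} (hKG : K ≤ contractFG G u v)
    (hKW : K.verts \ {x} ⊆ W) (hvW : v ∈ W) (huv : (G.induce W).spanningCoe.Reachable u v)
    {a b : ℕ} (hab : (K.deleteVerts {x}).spanningCoe.Adj a b) :
    (G.induce W).spanningCoe.Reachable a b := by
  obtain ⟨ha, hb, hab⟩ := hab
  obtain ⟨-, -, -, h | ⟨rfl, -, h⟩ | ⟨rfl, -, h⟩⟩ := hKG.2 hab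
  · exact Adj.reachable ⟨hKW ha, hKW hb, h⟩
  · exact huv.trans (Adj.reachable ⟨hvW, hKW hb, h⟩)
  · exact (Adj.reachable (G := (G.induce W).spanningCoe) ⟨hKW ha, hvW, h⟩).trans huv.symm

end Contraction

lemma TwoConnectedFG.induce_union_of_le_contractFG {G K : FG} {u v : ℕ} {C : Set ℕ}
    (hG : G.verts.Finite) (hK : TwoConnectedFG K) (hKG : K ≤ contractFG G u v)
    (hC : IsInducedCycleFG G C) (huC : u ∈ C) (hvC : v ∈ C) (huv : u ≠ v) {z₁ z₂ : ℕ}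
    (hz₁ : K.Adj u z₁) (hvz₁ : G.Adj v z₁) (hz₂ : K.Adj u z₂) (huz₂ : G.Adj u z₂) :
    TwoConnectedFG (G.induce (K.verts ∪ C)) := by
  have hKv : ∀ a ∈ K.verts, a ≠ v := fun a ha h => (hKG.1 ha).2 h
  have hKconn := fun y => Subgraph.connected_coe_iff.1 (hK {y} Set.subsingleton_singleton)
  have huK := K.edge_vert hz₁
  refine twoConnectedFG_of_forall_deleteVerts (hG.subset (Set.union_subset
    (fun a ha => (hKG.1 ha).1) hC.1)) fun x => ?_
  rw [Subgraph.deleteVerts_induce]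
  set W := (K.verts ∪ C) \ {x}
  have hCW : ∀ a ∈ C, a ≠ x → ∀ b ∈ C, b ≠ x → (G.induce W).spanningCoe.Reachable a b :=
    fun a ha hax b hb hbx => (hC.reachable_induce_sdiff ⟨ha, hax⟩ ⟨hb, hbx⟩).mono
      (Subgraph.spanningCoe_le_of_le (Subgraph.induce_mono_right
        (Set.sdiff_subset_sdiff_left Set.subset_union_right)))
  -- the hub is `v` if `x = u`, and `u` otherwise
  by_cases hxu : x = u
  · subst hxu
    refine Subgraph.connected_coe_of_forall_reachable (h := v) ⟨Or.inr hvC, huv.symm⟩ ?_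
    rintro t ⟨ht | ht, htx⟩
    · have hz₁x : z₁ ≠ x := fun h => (top_adj _ _).1 (K.adj_sub hz₁) h.symm
      have htz₁ := ((hKconn x).2 t ⟨ht, htx⟩ z₁ ⟨K.edge_vert hz₁.symm, hz₁x⟩).mono
        (spanningCoe_deleteVerts_le_of_le_contractFG (W := W) hKG fun a ha => ⟨Or.inl ha.1, ha.2⟩)
      exact htz₁.trans (Adj.reachable
        ⟨⟨Or.inl (K.edge_vert hz₁.symm), hz₁x⟩, ⟨Or.inr hvC, huv.symm⟩, hvz₁.symm⟩)
    · exact hCW t ht htx v hvC huv.symm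
  refine Subgraph.connected_coe_of_forall_reachable (h := u) ⟨Or.inl huK, Ne.symm hxu⟩ ?_
  rintro t ⟨ht | ht, htx⟩
  · by_cases hxv : x = v
    · subst hxv
      by_cases htu : t = u
      · rw [htu]
      have hz₂u : z₂ ≠ u := fun h => (top_adj _ _).1 (K.adj_sub hz₂) h.symm
      have hz₂K := K.edge_vert hz₂.symm
      have htz₂ := ((hKconn u).2 t ⟨ht, htu⟩ z₂ ⟨hz₂K, hz₂u⟩).mono
        (spanningCoe_deleteVerts_le_of_le_contractFG (W := W) hKG fun a ha =>
          ⟨Or.inl ha.1, hKv a ha.1⟩)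
      exact htz₂.trans (Adj.reachable ⟨⟨Or.inl hz₂K, hKv z₂ hz₂K⟩, ⟨Or.inl huK, huv⟩, huz₂.symm⟩)
    · exact ((hKconn x).2 t ⟨ht, htx⟩ u ⟨huK, Ne.symm hxu⟩).of_forall_adj fun a b hab =>
        reachable_induce_of_le_contractFG (W := W) hKG (fun a ha => ⟨Or.inl ha.1, ha.2⟩)
          ⟨Or.inr hvC, Ne.symm hxv⟩ (hCW u huC (Ne.symm hxu) v hvC (Ne.symm hxv)) hab
  · exact hCW t ht htx u huC (Ne.symm hxu)

lemma BipMinor.of_reflTransGen {H K K' : FG} (h : BipMinor H K) (hK : ReflTransGen BStep K' K) :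
    BipMinor H K' := by
  obtain ⟨H', hsteps, hiso⟩ := h
  exact ⟨H', hK.trans hsteps, hiso⟩

lemma isBlockFG_self {G : FG} (hG : TwoConnectedFG G) : IsBlockFG G G :=
  ⟨le_rfl, hG, fun _ h h' _ => le_antisymm h' h⟩

lemma BStep.verts_subset {G G' : FG} (h : BStep G G') : G'.verts ⊆ G.verts := by
  cases h <;> first | exact Set.sdiff_subset | exact subset_rfl

lemma exists_isBlockFG_bipMinor_of_le {G K H : FG} (hG : G.verts.Finite) (hKG : K ≤ G)
    (hK : TwoConnectedFG K) (hHK : BipMinor H K) : ∃ B, IsBlockFG G B ∧ BipMinor H B := by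
  obtain ⟨B, hKB, hB⟩ := exists_isBlockFG_le hG hKG hK
  exact ⟨B, hB, hHK.of_reflTransGen (reflTransGen_bStep_of_le (hG.subset hB.1.1) hKB)⟩

lemma exists_isBlockFG_bipMinor_of_le_contractFG {G K H : FG} {u v : ℕ} (hG : G.verts.Finite)
    (hadm : AdmissiblePair G u v) (hKG : K ≤ contractFG G u v) (hK : TwoConnectedFG K)
    (hHK : BipMinor H K) : ∃ B, IsBlockFG G B ∧ BipMinor H B := by
  obtain ⟨huv, w, huw, hwv, C, huC, hwC, hvC, hC, hCsep⟩ := hadm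
  by_cases hu : ∀ z, K.Adj u z → G.Adj u z
  · exact exists_isBlockFG_bipMinor_of_le hG (le_of_le_contractFG hKG hu) hK hHK
  by_cases hv : ∀ z, K.Adj u z → G.Adj v z
  · exact exists_isBlockFG_bipMinor_of_le hG (relabelFG_swap_le hKG (hC.1 hvC) hv) hK.relabel
      hHK.relabel
  push Not at hu hv
  obtain ⟨z₁, hz₁, hz₁u⟩ := hu
  obtain ⟨z₂, hz₂, hz₂v⟩ := hv
  have hmerged : ∀ z, K.Adj u z → G.Adj u z ∨ G.Adj v z := fun z hz => by
    obtain ⟨huz, -, -, h | ⟨-, -, h⟩ | ⟨rfl, -, -⟩⟩ := hKG.2 hz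
    exacts [Or.inl h, Or.inr h, absurd rfl huz]
  obtain ⟨B, hKCB, hB⟩ := exists_isBlockFG_le hG (Subgraph.induce_le (Set.union_subset
    (fun a ha => (hKG.1 ha).1) hC.1)) (hK.induce_union_of_le_contractFG hG hKG hC huC hvC huv
      hz₁ ((hmerged z₁ hz₁).resolve_left hz₁u) hz₂ ((hmerged z₂ hz₂).resolve_right hz₂v))
  have hKB : K.verts ⊆ B.verts := fun a ha => hKCB.1 (Or.inl ha)
  have hCB : C ⊆ B.verts := fun a ha => hKCB.1 (Or.inr ha)
  have hadmB : AdmissiblePair B u v :=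
    ⟨huv, w, hB.adj (hCB huC) (hCB hwC) huw, hB.adj (hCB hwC) (hCB hvC) hwv, C, huC, hwC, hvC,
      hB.induce_verts_eq ▸ hC.induce hCB, hB.nonSeparatingFG hG hCsep hCB⟩
  have hKB' : K ≤ contractFG B u v := by
    simpa only [hB.induce_verts_eq] using le_contractFG_induce hKG hKB (hCB hvC)
  exact ⟨B, hB, hHK.of_reflTransGen (.head (.contract B u v hadmB)
    (reflTransGen_bStep_of_le ((hG.subset hB.1.1).subset Set.sdiff_subset) hKB'))⟩

lemma BStep.exists_isBlockFG_bipMinor {G G' K H : FG} (hstep : BStep G G') (hG : G.verts.Finite)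
    (hKG' : K ≤ G') (hK : TwoConnectedFG K) (hHK : BipMinor H K) :
    ∃ B, IsBlockFG G B ∧ BipMinor H B := by
  cases hstep with
  | deleteVert v =>
    exact exists_isBlockFG_bipMinor_of_le hG (hKG'.trans Subgraph.deleteVerts_le) hK hHK
  | deleteEdge e =>
    exact exists_isBlockFG_bipMinor_of_le hG (hKG'.trans (Subgraph.deleteEdges_le _)) hK hHK
  | contract u v hadm => exact exists_isBlockFG_bipMinor_of_le_contractFG hG hadm hKG' hK hHK

/-- If `H` is a `2`-connected graph that is a bipartite minor of a (finite)
graph `G`, then `H` is a bipartite minor of some block of `G`. -/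
theorem bipMinor_block_of_twoConnected (G H : FG) (hGfin : G.verts.Finite)
    (hH2 : TwoConnectedFG H) (hHG : BipMinor H G) :
    ∃ B : FG, IsBlockFG G B ∧ BipMinor H B := by
  obtain ⟨H', hsteps, ⟨φ⟩⟩ := hHG
  induction hsteps using Relation.ReflTransGen.head_induction_on with
  | refl => exact ⟨H', isBlockFG_self (hH2.of_iso φ), H', .refl, ⟨φ⟩⟩
  | head hstep _ ih =>
    obtain ⟨B, hB, hHB⟩ := ih (hGfin.subset hstep.verts_subset)
    exact hstep.exists_isBlockFG_bipMinor hGfin hB.1 hB.2.1 hHB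
end

section
/- The bipartite minor relation is not a well-quasi-order on the class of all bipartite graphs: there exists an infinite sequence of bipartite graphs (in fact, of forests) G_1, G_2, … such that for no pair of indices i < j does G_i ≤_B G_j hold. -/
open SimpleGraph

/-! Forests have no induced cycles, hence admit no admissible contraction, so the bipartite
minors of a forest are just its subgraphs. In `treeFG l` only `0` and `l` have three
neighbours, and they are joined by the spine of length `l`. An embedding of `treeFG i` into
`treeFG j` therefore sends `{0, i}` onto `{0, j}` and the spine of `treeFG i` to a walk of
length `i` between `0` and `j`; projecting to the spine of `treeFG j` shows `j ≤ i`. -/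

namespace SimpleGraph

theorem not_isAcyclic_of_forall_ncard_neighborSet_eq_two {V : Type*} {G : SimpleGraph V}
    [Finite V] [Nontrivial V] (hconn : G.Connected)
    (hdeg : ∀ v, (G.neighborSet v).ncard = 2) : ¬ G.IsAcyclic := by
  intro hacyc
  classical
  have := Fintype.ofFinite V
  obtain ⟨v, hv⟩ := IsTree.exists_vert_degree_one_of_nontrivial ⟨hconn, hacyc⟩
  rw [← card_neighborSet_eq_degree, ← Nat.card_eq_fintype_card, Nat.card_coe_set_eq, hdeg] at hv
  omega

theorem isAcyclic_of_adj_of_lt_eq_parent {V : Type*} [LinearOrder V] {G : SimpleGraph V}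
    (parent : V → V) (h : ∀ ⦃u v⦄, G.Adj u v → u < v → u = parent v) : G.IsAcyclic := by
  intro v c hc
  obtain ⟨m, hm, hmax⟩ := c.support.toFinset.exists_max_image id ⟨v, by simp⟩
  rw [List.mem_toFinset] at hm
  set c' := c.rotate m hm
  have hc' : c'.IsCycle := (Walk.isCycle_rotate hm).mpr hc
  have eq_parent : ∀ x, G.Adj m x → x ∈ c'.support → x = parent m := fun x hx hxs =>
    h hx.symm <| (hmax x (by simpa [c'] using hxs)).lt_of_ne hx.ne.symm
  exact hc'.snd_ne_penultimate <|
    (eq_parent _ (c'.adj_snd hc'.not_nil) (Walk.getVert_mem_support _ _)).trans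
      (eq_parent _ (c'.adj_penultimate hc'.not_nil).symm (Walk.getVert_mem_support _ _)).symm

end SimpleGraph

theorem abs_sub_le_of_abs_sub_succ_le_one (u : ℕ → ℤ) :
    ∀ n, (∀ k < n, |u (k + 1) - u k| ≤ 1) → |u n - u 0| ≤ n
  | 0, _ => by simp
  | n + 1, h => by
    have ih := abs_sub_le_of_abs_sub_succ_le_one u n fun k hk => h k (by omega)
    calc |u (n + 1) - u 0| ≤ |u (n + 1) - u n| + |u n - u 0| := abs_sub_le _ _ _
      _ ≤ 1 + n := add_le_add (h n (by omega)) ih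
      _ = (n + 1 : ℕ) := by push_cast; ring

theorem ForestFG.anti {K G : FG} (hle : K ≤ G) (hG : ForestFG G) : ForestFG K :=
  hG.comap (Subgraph.inclusion hle) (Subgraph.inclusion.injective hle)

theorem ForestFG.not_isInducedCycleFG {K : FG} (hK : ForestFG K) (C : Set ℕ) :
    ¬ IsInducedCycleFG K C := by
  rintro ⟨hsub, hfin, hcard, hconn, hdeg⟩
  have : Finite (K.induce C).verts := hfin.to_subtype
  have : Nontrivial (K.induce C).verts :=
    Set.nontrivial_coe_sort.mpr <| Set.one_lt_ncard_iff_nontrivial.mp (show 1 < C.ncard by omega)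
  refine not_isAcyclic_of_forall_ncard_neighborSet_eq_two hconn (fun v => ?_)
    (ForestFG.anti ((Subgraph.induce_mono_right hsub).trans_eq Subgraph.induce_self_verts) hK)
  rw [← Nat.card_coe_set_eq, Nat.card_congr (Subgraph.coeNeighborSetEquiv v), Nat.card_coe_set_eq,
    ← hdeg v v.2]
  congr 1
  ext y
  simpa [Subgraph.induce_adj] using fun _ _ => v.2

theorem ForestFG.not_admissiblePair {K : FG} (hK : ForestFG K) (u v : ℕ) :
    ¬ AdmissiblePair K u v := by
  rintro ⟨-, -, -, -, C, -, -, -, hC, -⟩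
  exact hK.not_isInducedCycleFG C hC

theorem BStep.le_of_forestFG {K H : FG} (hK : ForestFG K) : BStep K H → H ≤ K
  | .deleteVert _ _ => Subgraph.deleteVerts_le
  | .deleteEdge _ _ => Subgraph.deleteEdges_le _
  | .contract _ u v h => absurd h (hK.not_admissiblePair u v)

theorem ForestFG.le_of_reflTransGen_bStep {G H : FG} (hG : ForestFG G)
    (h : Relation.ReflTransGen BStep G H) : H ≤ G := by
  induction h with
  | refl => exact le_rfl
  | tail _ hstep ih => exact (hstep.le_of_forestFG (hG.anti ih)).trans ih

theorem BipMinor.isSubgraphFG_of_forestFG {H G : FG} (h : BipMinor H G) (hG : ForestFG G) :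
    IsSubgraphFG H G :=
  let ⟨H', hchain, hiso⟩ := h
  ⟨H', hG.le_of_reflTransGen_bStep hchain, hiso⟩

theorem IsSubgraphFG.exists_injOn_adj {H G : FG} (h : IsSubgraphFG H G) :
    ∃ g : ℕ → ℕ, Set.InjOn g H.verts ∧ ∀ ⦃x y⦄, H.Adj x y → G.Adj (g x) (g y) := by
  classical
  obtain ⟨S, hle, ⟨φ⟩⟩ := h
  refine ⟨fun x => if hx : x ∈ H.verts then φ.symm ⟨x, hx⟩ else 0, fun x hx y hy hxy => ?_,
    fun x y hxy => ?_⟩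
  · exact Subtype.ext_iff.mp <| φ.symm.injective <|
      Subtype.val_injective (by simpa [hx, hy] using hxy)
  · have hS : S.coe.Adj (φ.symm ⟨x, H.edge_vert hxy⟩) (φ.symm ⟨y, H.edge_vert hxy.symm⟩) :=
      φ.symm.map_adj_iff.mpr hxy
    simpa [H.edge_vert hxy, H.edge_vert hxy.symm] using hle.2 hS

theorem mem_treeFG_verts {l x : ℕ} : x ∈ (treeFG l).verts ↔ x < l + 5 := Iff.rfl

theorem treeFG_adj {l x y : ℕ} : (treeFG l).Adj x y ↔
    x ≠ y ∧ x < l + 5 ∧ y < l + 5 ∧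
      (((y = x + 1 ∧ y ≤ l) ∨ (x = 0 ∧ (y = l + 1 ∨ y = l + 2)) ∨
        (x = l ∧ (y = l + 3 ∨ y = l + 4))) ∨
       ((x = y + 1 ∧ x ≤ l) ∨ (y = 0 ∧ (x = l + 1 ∨ x = l + 2)) ∨
        (y = l ∧ (x = l + 3 ∨ x = l + 4)))) := Iff.rfl

theorem forestFG_treeFG (l : ℕ) : ForestFG (treeFG l) := by
  refine IsAcyclic.embedding (Subgraph.coeEmbeddingSpanningCoe _) <|
    isAcyclic_of_adj_of_lt_eq_parent (fun x => if x ≤ l then x - 1 else if x ≤ l + 2 then 0 else l)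
      fun u v h huv => ?_
  rw [Subgraph.spanningCoe_adj, treeFG_adj] at h
  split_ifs <;> omega

theorem treeFG_eq_zero_or_eq_of_adj₃ {l x y₁ y₂ y₃ : ℕ} (h₁ : (treeFG l).Adj x y₁)
    (h₂ : (treeFG l).Adj x y₂) (h₃ : (treeFG l).Adj x y₃) (h₁₂ : y₁ ≠ y₂) (h₁₃ : y₁ ≠ y₃)
    (h₂₃ : y₂ ≠ y₃) : x = 0 ∨ x = l := by
  rw [treeFG_adj] at h₁ h₂ h₃
  omega

def treeSpineProj (l x : ℕ) : ℤ := if x ≤ l then x else if x ≤ l + 2 then 0 else l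

theorem abs_treeSpineProj_sub_le_one {l x y : ℕ} (h : (treeFG l).Adj x y) :
    |treeSpineProj l x - treeSpineProj l y| ≤ 1 := by
  rw [treeFG_adj] at h
  rw [abs_le, treeSpineProj, treeSpineProj]
  split_ifs <;> omega

theorem le_of_treeFG_map {I J : ℕ} (hI : 1 ≤ I) {g : ℕ → ℕ}
    (hinj : Set.InjOn g (treeFG I).verts)
    (hadj : ∀ ⦃x y⦄, (treeFG I).Adj x y → (treeFG J).Adj (g x) (g y)) : J ≤ I := by
  have branch : ∀ x y₁ y₂ y₃, (treeFG I).Adj x y₁ → (treeFG I).Adj x y₂ →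
      (treeFG I).Adj x y₃ → y₁ ≠ y₂ → y₁ ≠ y₃ → y₂ ≠ y₃ → g x = 0 ∨ g x = J :=
    fun x y₁ y₂ y₃ h₁ h₂ h₃ h₁₂ h₁₃ h₂₃ =>
      treeFG_eq_zero_or_eq_of_adj₃ (hadj h₁) (hadj h₂) (hadj h₃)
        (hinj.ne h₁.snd_mem h₂.snd_mem h₁₂) (hinj.ne h₁.snd_mem h₃.snd_mem h₁₃)
        (hinj.ne h₂.snd_mem h₃.snd_mem h₂₃)
  have hzero := branch 0 1 (I + 1) (I + 2) (by rw [treeFG_adj]; omega) (by rw [treeFG_adj]; omega)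
    (by rw [treeFG_adj]; omega) (by omega) (by omega) (by omega)
  have hend := branch I (I - 1) (I + 3) (I + 4) (by rw [treeFG_adj]; omega)
    (by rw [treeFG_adj]; omega) (by rw [treeFG_adj]; omega) (by omega) (by omega) (by omega)
  have hne : g 0 ≠ g I := hinj.ne (mem_treeFG_verts.mpr (by omega))
    (mem_treeFG_verts.mpr (by omega)) (by omega)
  have hspine : |treeSpineProj J (g I) - treeSpineProj J (g 0)| ≤ I :=
    abs_sub_le_of_abs_sub_succ_le_one (fun k => treeSpineProj J (g k)) I fun k hk =>
      abs_treeSpineProj_sub_le_one (hadj (by rw [treeFG_adj]; omega))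
  rcases hzero with hzero | hzero <;> rcases hend with hend | hend
  · exact absurd (hzero.trans hend.symm) hne
  · simpa [hzero, hend, treeSpineProj] using hspine
  · simpa [hzero, hend, treeSpineProj] using hspine
  · exact absurd (hzero.trans hend.symm) hne

/-- The bipartite minor relation is not a well-quasi-order on the class of all
bipartite graphs: there is an infinite sequence of (finite) bipartite graphs — in fact,
forests — `G_1, G_2, …` such that for no `i < j` does `G_i ≤_B G_j` hold. -/
theorem bipMinor_not_wqo_on_bipartite :
    ∃ G : ℕ → FG,
      (∀ n, (G n).verts.Finite ∧ ForestFG (G n) ∧ BipartiteFG (G n)) ∧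
      (∀ i j, i < j → ¬ BipMinor (G i) (G j)) := by
  refine ⟨fun n => treeFG (n + 1),
    fun n => ⟨Set.finite_lt_nat _, forestFG_treeFG _, (forestFG_treeFG _).colorable_two⟩, ?_⟩
  intro i j hij hminor
  obtain ⟨g, hinj, hadj⟩ := (hminor.isSubgraphFG_of_forestFG (forestFG_treeFG _)).exists_injOn_adj
  have := le_of_treeFG_map (by omega) hinj hadj
  omega
end
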